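/- arXiv:1308.1505 — 7 statements merged into one kernel-verified Lean document; each statement's English description precedes it below -/
import Mathlib

section
/- Let ρ = Σ_{j,l=1}^n C_{jl} |e_j f_j⟩⟨e_l f_l| be a Schmidt-correlated state. If there exist indices j₀ ≠ l₀ with C_{j₀l₀} ≠ 0, then the partial transpose ρ^{T_B} = Σ_{j,l} C_{jl} |e_j f_l⟩⟨e_l f_j| is not positive semidefinite. Specifically, the 2×2 principal minor of ρ^{T_B} on the index pair (j₀l₀, l₀j₀) equals −|C_{j₀l₀}|² < 0. -/
open Matrix Complex BigOperators
open scoped ComplexOrder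

theorem tb_apply_aux {n : ℕ} (C : Matrix (Fin n) (Fin n) ℂ) (a b c d : Fin n) :
    (∑ j : Fin n, ∑ l : Fin n, C j l • Matrix.single (j, l) (l, j) (1 : ℂ)) (a,b) (c,d)
    = if a = d ∧ b = c then C a b else 0 := by
  simp only [Matrix.sum_apply, Matrix.smul_apply, Matrix.single, of_apply,
    Prod.mk.injEq, smul_eq_mul, mul_ite, mul_one, mul_zero]
  by_cases h1 : a = d <;> by_cases h2 : b = c <;> simp [h1, h2]
  · subst h1; subst h2
    rw [Finset.sum_eq_single a, Finset.sum_eq_single b] <;> intros <;> simp_all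
  all_goals
    refine Finset.sum_eq_zero fun x _ => Finset.sum_eq_zero fun y _ => ?_
    split_ifs with h
    · obtain ⟨⟨hx, hy⟩, hy', hx'⟩ := h; exfalso; subst hx; subst hy; simp_all
    · rfl

theorem rho_apply_aux {n : ℕ} (C : Matrix (Fin n) (Fin n) ℂ) (a b : Fin n) :
    (∑ j : Fin n, ∑ l : Fin n, C j l • Matrix.single (j, j) (l, l) (1 : ℂ)) (a,a) (b,b)
    = C a b := by
  simp only [Matrix.sum_apply, Matrix.smul_apply, Matrix.single, of_apply,
    Prod.mk.injEq, smul_eq_mul, mul_ite, mul_one, mul_zero]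
  rw [Finset.sum_eq_single a, Finset.sum_eq_single b] <;> intros <;> simp_all

/-- for a Schmidt-correlated state ρ = Σ_{j,l} C_{jl}|e_j f_j⟩⟨e_l f_l|
with some off-diagonal entry C_{j₀l₀} ≠ 0, the partial transpose
ρ^{T_B} = Σ_{j,l} C_{jl}|e_j f_l⟩⟨e_l f_j| is not positive semidefinite; indeed the
2×2 principal minor of ρ^{T_B} on the pair of indices (j₀l₀, l₀j₀) equals
−|C_{j₀l₀}|² < 0. -/
theorem schmidt_correlated_offdiag_NPPT {n : ℕ}
    (C : Matrix (Fin n) (Fin n) ℂ)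
    (ρ ρTB : Matrix (Fin n × Fin n) (Fin n × Fin n) ℂ)
    (hρ : ρ = ∑ j : Fin n, ∑ l : Fin n, C j l • Matrix.single (j, j) (l, l) (1 : ℂ))
    (hpsd : ρ.PosSemidef) (htr : ρ.trace = 1)
    (hTB : ρTB = ∑ j : Fin n, ∑ l : Fin n, C j l • Matrix.single (j, l) (l, j) (1 : ℂ))
    (j₀ l₀ : Fin n) (hne : j₀ ≠ l₀) (hC : C j₀ l₀ ≠ 0) :
    ¬ ρTB.PosSemidef ∧
    ρTB (j₀, l₀) (j₀, l₀) * ρTB (l₀, j₀) (l₀, j₀)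
      - ρTB (j₀, l₀) (l₀, j₀) * ρTB (l₀, j₀) (j₀, l₀)
      = -((Complex.normSq (C j₀ l₀) : ℂ)) ∧
    0 < Complex.normSq (C j₀ l₀) := by
  have hconj : C l₀ j₀ = starRingEnd ℂ (C j₀ l₀) := by
    have h := hpsd.1
    have h2 : ρ (l₀, l₀) (j₀, j₀) = starRingEnd ℂ (ρ (j₀, j₀) (l₀, l₀)) :=
      (Matrix.IsHermitian.apply h _ _).symm
    rw [hρ, rho_apply_aux, rho_apply_aux] at h2
    exact h2
  have e1 : ρTB (j₀, l₀) (j₀, l₀) = 0 := by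
    rw [hTB, tb_apply_aux]; simp [hne]
  have e2 : ρTB (l₀, j₀) (l₀, j₀) = 0 := by
    rw [hTB, tb_apply_aux]; simp [Ne.symm hne]
  have e3 : ρTB (j₀, l₀) (l₀, j₀) = C j₀ l₀ := by
    rw [hTB, tb_apply_aux]; simp
  have e4 : ρTB (l₀, j₀) (j₀, l₀) = starRingEnd ℂ (C j₀ l₀) := by
    rw [hTB, tb_apply_aux]; simp [hconj]
  have hns : (0:ℝ) < Complex.normSq (C j₀ l₀) := Complex.normSq_pos.mpr hC
  refine ⟨?_, ?_, hns⟩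
  · intro hP
    set c := C j₀ l₀ with hc
    set x : Fin n × Fin n → ℂ := fun p =>
      if p = (j₀, l₀) then 1 else if p = (l₀, j₀) then -(starRingEnd ℂ c) else 0 with hx
    have hne2 : (j₀, l₀) ≠ (l₀, j₀) := by simp [Prod.ext_iff, hne]
    have hxv : ∀ q, q ≠ (j₀,l₀) → q ≠ (l₀,j₀) → x q = 0 := by
      intro q h1 h2; simp [hx, h1, h2]
    have hmv1 : ρTB.mulVec x (j₀, l₀) = -((Complex.normSq c : ℂ)) := by
      rw [Matrix.mulVec, dotProduct,
        Finset.sum_eq_add_of_mem (j₀,l₀) (l₀,j₀) (Finset.mem_univ _) (Finset.mem_univ _) hne2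
          (fun q _ h => by rw [hxv q h.1 h.2, mul_zero])]
      simp [hx, hne, Ne.symm hne, Prod.ext_iff, e1, e3, Complex.mul_conj]
    have hmv2 : ρTB.mulVec x (l₀, j₀) = starRingEnd ℂ c := by
      rw [Matrix.mulVec, dotProduct,
        Finset.sum_eq_add_of_mem (j₀,l₀) (l₀,j₀) (Finset.mem_univ _) (Finset.mem_univ _) hne2
          (fun q _ h => by rw [hxv q h.1 h.2, mul_zero])]
      simp [hx, hne, Ne.symm hne, Prod.ext_iff, e2, e4]
    have hdot : star x ⬝ᵥ ρTB.mulVec x = -((2 * Complex.normSq c : ℝ) : ℂ) := by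
      rw [dotProduct,
        Finset.sum_eq_add_of_mem (j₀,l₀) (l₀,j₀) (Finset.mem_univ _) (Finset.mem_univ _) hne2
          (fun q _ h => by simp [Pi.star_apply, hxv q h.1 h.2])]
      simp only [Pi.star_apply, hmv1, hmv2]; simp only [hx]
      simp [hne, Ne.symm hne, Prod.ext_iff, Complex.mul_conj']
      rw [← Complex.sq_norm c]
      push_cast
      ring
    have hle := hP.dotProduct_mulVec_nonneg x
    rw [hdot] at hle
    have : (0:ℝ) ≤ -(2 * Complex.normSq c) := by
      exact_mod_cast hle
    linarith
  · rw [e1, e2, e3, e4, Complex.mul_conj]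
    ring
end

section
/- Let ρ = Σ_{j,l=1}^n C_{jl} |e_j f_j⟩⟨e_l f_l| be a Schmidt-correlated state on ℂ^n ⊗ ℂ^n. Then ρ is separable if and only if C_{jl} = 0 for all j ≠ l, i.e. ρ = Σ_j C_{jj} |e_j f_j⟩⟨e_j f_j|. -/
open Matrix Complex BigOperators
open scoped ComplexOrder

/-- The rank-one projector |v⟩⟨v| as a matrix. -/
noncomputable def projOp {m : Type*} [Fintype m] (v : m → ℂ) : Matrix m m ℂ :=
  vecMulVec v (star v)

/-- A density matrix on ℂ^n ⊗ ℂ^n is separable if it is a convex combination of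
projectors onto product unit vectors. -/
def Separable {n : ℕ} (ρ : Matrix (Fin n × Fin n) (Fin n × Fin n) ℂ) : Prop :=
  ∃ (m : ℕ) (q : Fin m → ℝ) (a b : Fin m → Fin n → ℂ),
    (∀ i, 0 ≤ q i) ∧ (∑ i, q i = 1) ∧
    (∀ i, ∑ j, Complex.normSq (a i j) = 1) ∧
    (∀ i, ∑ j, Complex.normSq (b i j) = 1) ∧
    ρ = ∑ i, (q i : ℂ) • projOp (fun p : Fin n × Fin n => a i p.1 * b i p.2)

/-- Entry formula for a Schmidt-correlated matrix. -/
lemma schmidt_entry {n : ℕ} (C : Matrix (Fin n) (Fin n) ℂ)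
    (ρ : Matrix (Fin n × Fin n) (Fin n × Fin n) ℂ)
    (hρ : ρ = ∑ j : Fin n, ∑ l : Fin n, C j l • Matrix.single (j, j) (l, l) (1 : ℂ)) :
    ∀ p r : Fin n × Fin n, ρ p r = if p.2 = p.1 ∧ r.2 = r.1 then C p.1 r.1 else 0 := by
  rintro ⟨p1, p2⟩ ⟨r1, r2⟩
  subst hρ
  simp only [Matrix.sum_apply, Matrix.single, Matrix.smul_apply, of_apply, smul_eq_mul, mul_ite,
    mul_one, mul_zero, Prod.mk.injEq]
  by_cases h1 : p2 = p1
  · by_cases h2 : r2 = r1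
    · subst h1; subst h2
      simp [and_self, ite_and, Finset.sum_ite_eq']
    · simp only [h1, h2, and_true, and_false, if_false]
      apply Finset.sum_eq_zero; intro x _
      apply Finset.sum_eq_zero; intro y _
      rw [if_neg]; rintro ⟨-, hy1, hy2⟩; exact h2 (hy2.symm.trans hy1)
  · simp only [h1, false_and, and_false, if_false]
    apply Finset.sum_eq_zero; intro x _
    apply Finset.sum_eq_zero; intro y _
    rw [if_neg]; rintro ⟨⟨hx1, hx2⟩, -⟩; exact h1 (hx2.symm.trans hx1)

/-- The projector onto a product of standard basis vectors is a standard basis matrix. -/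
lemma proj_single_eq_std {n : ℕ} (i : Fin n) :
    projOp (fun p : Fin n × Fin n =>
      (if p.1 = i then (1 : ℂ) else 0) * (if p.2 = i then 1 else 0)) =
    Matrix.single (i, i) (i, i) (1 : ℂ) := by
  ext ⟨p1, p2⟩ ⟨r1, r2⟩
  simp only [projOp, vecMulVec_apply, Pi.star_apply, Matrix.single, of_apply, Prod.mk.injEq]
  by_cases h1 : p1 = i <;> by_cases h2 : p2 = i <;> by_cases h3 : r1 = i <;>
    by_cases h4 : r2 = i <;> simp [h1, h2, h3, h4, eq_comm] <;> grind

/-- a Schmidt-correlated state ρ = Σ_{j,l} C_{jl}|e_j f_j⟩⟨e_l f_l| is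
separable iff C_{jl} = 0 for all j ≠ l. -/
theorem schmidt_correlated_separable_iff_diagonal {n : ℕ}
    (C : Matrix (Fin n) (Fin n) ℂ)
    (ρ : Matrix (Fin n × Fin n) (Fin n × Fin n) ℂ)
    (hρ : ρ = ∑ j : Fin n, ∑ l : Fin n, C j l • Matrix.single (j, j) (l, l) (1 : ℂ))
    (hpsd : ρ.PosSemidef) (htr : ρ.trace = 1) :
    Separable ρ ↔ ∀ j l, j ≠ l → C j l = 0 := by
  have hent := schmidt_entry C ρ hρ
  constructor
  · rintro ⟨m, q, a, b, hq0, hq1, ha, hb, hdecomp⟩ j l hjl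
    have hsep : ∀ p r : Fin n × Fin n, ρ p r =
        ∑ i, (q i : ℂ) * ((a i p.1 * b i p.2) * (starRingEnd ℂ) (a i r.1 * b i r.2)) := by
      intro p r
      rw [hdecomp]
      simp [Matrix.sum_apply, projOp, vecMulVec_apply, mul_assoc]
    -- diagonal entries at (j,l) with j ≠ l vanish
    have hzero : ∀ i, q i * Complex.normSq (a i j * b i l) = 0 := by
      have h0 : ρ (j, l) (j, l) = 0 := by
        rw [hent]; simp [Ne.symm hjl]
      rw [hsep] at h0
      have h0' : ((∑ i, q i * Complex.normSq (a i j * b i l) : ℝ) : ℂ) = 0 := by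
        rw [← h0]
        push_cast
        refine Finset.sum_congr rfl fun i _ => ?_
        rw [Complex.mul_conj]
      have hreal : (∑ i, q i * Complex.normSq (a i j * b i l)) = 0 := by
        exact_mod_cast h0'
      have hnn : ∀ i ∈ Finset.univ, 0 ≤ q i * Complex.normSq (a i j * b i l) :=
        fun i _ => mul_nonneg (hq0 i) (Complex.normSq_nonneg _)
      intro i
      exact (Finset.sum_eq_zero_iff_of_nonneg hnn).mp hreal i (Finset.mem_univ i)
    have hCjl : C j l = ρ (j, j) (l, l) := by rw [hent]; simp
    rw [hCjl, hsep]
    apply Finset.sum_eq_zero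
    intro i _
    rcases mul_eq_zero.mp (hzero i) with hqi | hns
    · rw [hqi]; simp
    · rcases mul_eq_zero.mp (Complex.normSq_eq_zero.mp hns) with h | h <;> simp [h]
  · intro hC
    -- diagonal entries are real and nonneg
    have hdiag : ∀ i : Fin n, (0 : ℂ) ≤ C i i := by
      intro i
      have h' : (0 : ℂ) ≤ ρ (i, i) (i, i) := hpsd.diag_nonneg
      rwa [hent (i, i) (i, i), if_pos ⟨rfl, rfl⟩] at h'
    have him : ∀ i, (C i i).im = 0 := fun i => ((Complex.nonneg_iff.mp (hdiag i)).2).symm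
    have hre : ∀ i, 0 ≤ (C i i).re := fun i => (Complex.nonneg_iff.mp (hdiag i)).1
    have hCr : ∀ i, (((C i i).re : ℝ) : ℂ) = C i i := by
      intro i
      exact Complex.ext (by simp) (by simp [him i])
    -- trace condition
    have htrace : ∑ i : Fin n, C i i = 1 := by
      rw [← htr, Matrix.trace, Fintype.sum_prod_type]
      simp only [Matrix.diag_apply, hent]
      simp [Finset.sum_ite_eq']
    have htre : ∑ i : Fin n, (C i i).re = 1 := by
      have := congrArg Complex.re htrace
      simpa [Complex.re_sum] using this
    refine ⟨n, fun i => (C i i).re,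
      fun i j => if j = i then 1 else 0, fun i j => if j = i then 1 else 0,
      hre, htre, ?_, ?_, ?_⟩
    · intro i; simp [apply_ite Complex.normSq, Finset.sum_ite_eq']
    · intro i; simp [apply_ite Complex.normSq, Finset.sum_ite_eq']
    · rw [hρ]
      rw [show (∑ j : Fin n, ∑ l : Fin n, C j l • Matrix.single (j, j) (l, l) (1 : ℂ)) =
          ∑ i : Fin n, C i i • Matrix.single (i, i) (i, i) (1 : ℂ) from ?_]
      · refine Finset.sum_congr rfl fun i _ => ?_
        rw [proj_single_eq_std i, hCr i]
      · refine Finset.sum_congr rfl fun j _ => ?_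
        rw [Finset.sum_eq_single j]
        · intro l _ hl
          rw [hC j l (Ne.symm hl), zero_smul]
        · simp
end

section
/- Let ρ = Σ_{j,l=1}^n C_{jl} |e_j f_j⟩⟨e_l f_l| be a Schmidt-correlated state. Then ρ is PPT (its partial transpose is positive semidefinite) if and only if C is diagonal, and this holds if and only if ρ is separable. That is, for Schmidt-correlated states PPT is equivalent to separability. -/
open Matrix Complex BigOperators
open scoped ComplexOrder

section Helpers

lemma projOp_posSemidef {m : Type*} [Fintype m] (v : m → ℂ) :
    (projOp v).PosSemidef := by
  refine Matrix.PosSemidef.of_dotProduct_mulVec_nonneg ?_ ?_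
  · ext a b
    simp only [conjTranspose_apply, projOp, vecMulVec_apply, Pi.star_apply, RCLike.star_def,
      _root_.map_mul, conj_conj]
    ring
  · intro x
    have h : star x ⬝ᵥ (projOp v) *ᵥ x
        = (∑ i, (starRingEnd ℂ) (x i) * v i) * (starRingEnd ℂ) (∑ i, (starRingEnd ℂ) (x i) * v i) := by
      simp only [projOp, dotProduct, mulVec, vecMulVec_apply, Pi.star_apply, RCLike.star_def,
        map_sum, _root_.map_mul, conj_conj, Finset.mul_sum, Finset.sum_mul]
      rw [Finset.sum_comm]
      refine Finset.sum_congr rfl fun i _ => Finset.sum_congr rfl fun j _ => by ring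
    rw [h, mul_conj]
    exact_mod_cast Complex.normSq_nonneg _

lemma psd_smul {m : Type*} [Fintype m] {M : Matrix m m ℂ} (h : M.PosSemidef) {c : ℝ}
    (hc : 0 ≤ c) : ((c : ℂ) • M).PosSemidef := by
  refine Matrix.PosSemidef.of_dotProduct_mulVec_nonneg ?_ ?_
  · ext i j
    simp only [conjTranspose_apply, Matrix.smul_apply, star_mul', smul_eq_mul,
      RCLike.star_def, Complex.conj_ofReal]
    rw [← h.1.apply i j]
    simp [mul_comm]
  · intro x
    rw [smul_mulVec, dotProduct_smul, smul_eq_mul]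
    exact mul_nonneg (by exact_mod_cast hc) (h.dotProduct_mulVec_nonneg x)

lemma psd_add {m : Type*} [Fintype m] {A B : Matrix m m ℂ} (hA : A.PosSemidef)
    (hB : B.PosSemidef) : (A + B).PosSemidef :=
  .of_dotProduct_mulVec_nonneg (hA.1.add hB.1) fun x => by
    rw [add_mulVec, dotProduct_add]; exact add_nonneg (hA.dotProduct_mulVec_nonneg x) (hB.dotProduct_mulVec_nonneg x)

lemma psd_zero {m : Type*} [Fintype m] : (0 : Matrix m m ℂ).PosSemidef :=
  ⟨isHermitian_zero, fun x => by simp⟩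

lemma psd_sum {m ι : Type*} [Fintype m] (s : Finset ι) (f : ι → Matrix m m ℂ)
    (h : ∀ i ∈ s, (f i).PosSemidef) : (∑ i ∈ s, f i).PosSemidef :=
  Finset.sum_induction f _ (fun _ _ => psd_add) psd_zero h

lemma rho_apply {n : ℕ} (C : Matrix (Fin n) (Fin n) ℂ) (a b : Fin n × Fin n) :
    (∑ j : Fin n, ∑ l : Fin n, C j l • single (j, j) (l, l) (1 : ℂ)) a b
      = if a.2 = a.1 ∧ b.2 = b.1 then C a.1 b.1 else 0 := by
  rcases a with ⟨a1, a2⟩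
  rcases b with ⟨b1, b2⟩
  simp only [Matrix.sum_apply, Matrix.smul_apply, single_apply, of_apply, Prod.mk.injEq,
    smul_eq_mul, mul_ite, mul_one, mul_zero, ite_and, Finset.sum_ite_eq, Finset.sum_ite_eq',
    Finset.mem_univ, if_true]
  by_cases h1 : a2 = a1 <;> by_cases h2 : b2 = b1 <;>
    simp [h1, h2, eq_comm]

lemma rhoTB_apply {n : ℕ} (C : Matrix (Fin n) (Fin n) ℂ) (a b : Fin n × Fin n) :
    (∑ j : Fin n, ∑ l : Fin n, C j l • single (j, l) (l, j) (1 : ℂ)) a b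
      = if a.1 = b.2 ∧ a.2 = b.1 then C a.1 a.2 else 0 := by
  rcases a with ⟨a1, a2⟩
  rcases b with ⟨b1, b2⟩
  simp only [Matrix.sum_apply, Matrix.smul_apply, single_apply, of_apply, Prod.mk.injEq,
    smul_eq_mul, mul_ite, mul_one, mul_zero, ite_and, Finset.sum_ite_eq, Finset.sum_ite_eq',
    Finset.mem_univ, if_true]
  by_cases h1 : a1 = b2 <;> by_cases h2 : a2 = b1 <;>
    simp [h1, h2, eq_comm]

lemma quad_single {m : Type*} [Fintype m] [DecidableEq m] (M : Matrix m m ℂ) (p₀ : m) :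
    star (fun p => if p = p₀ then (1 : ℂ) else 0) ⬝ᵥ
      M *ᵥ (fun p => if p = p₀ then (1 : ℂ) else 0) = M p₀ p₀ := by
  simp [dotProduct, mulVec, apply_ite (starRingEnd ℂ), Finset.sum_ite_eq', mul_ite, ite_mul]

lemma quadTB {n : ℕ} (C : Matrix (Fin n) (Fin n) ℂ)
    (M : Matrix (Fin n × Fin n) (Fin n × Fin n) ℂ)
    (hM : ∀ a b, M a b = if a.1 = b.2 ∧ a.2 = b.1 then C a.1 a.2 else 0)
    (x : Fin n × Fin n → ℂ) :
    star x ⬝ᵥ M *ᵥ x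
      = ∑ a : Fin n × Fin n, (starRingEnd ℂ) (x a) * (C a.1 a.2 * x (a.2, a.1)) := by
  simp only [dotProduct, mulVec, Pi.star_apply, RCLike.star_def]
  refine Finset.sum_congr rfl fun a _ => ?_
  congr 1
  rw [Fintype.sum_eq_single (a.2, a.1)]
  · rw [hM]; simp
  · intro b hb
    rw [hM]
    rcases b with ⟨b1, b2⟩
    by_cases h1 : a.1 = b2 <;> by_cases h2 : a.2 = b1 <;> simp_all
    try exact hb rfl

lemma key1 {n : ℕ} (C : Matrix (Fin n) (Fin n) ℂ)
    (ρTB : Matrix (Fin n × Fin n) (Fin n × Fin n) ℂ)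
    (hTBa : ∀ a b, ρTB a b = if a.1 = b.2 ∧ a.2 = b.1 then C a.1 a.2 else 0)
    (h : ρTB.PosSemidef) : ∀ j l, j ≠ l → C j l = 0 := by
  intro j l hjl
  have hherm : C l j = (starRingEnd ℂ) (C j l) := by
    have := h.1.apply (j, l) (l, j)
    rw [hTBa, hTBa] at this
    simp only [and_self, if_true, if_pos] at this
    · exact (star_eq_iff_star_eq.mp this).symm
  set c : ℂ := -((starRingEnd ℂ) (C j l)) with hc
  set x : Fin n × Fin n → ℂ := fun p => if p = (j, l) then 1 else if p = (l, j) then c else 0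
    with hx
  have hq := h.dotProduct_mulVec_nonneg x
  rw [quadTB C ρTB hTBa x] at hq
  have hne : ((j, l) : Fin n × Fin n) ≠ (l, j) := fun h' => hjl (Prod.mk.inj h').1
  have hsub : (∑ a : Fin n × Fin n, (starRingEnd ℂ) (x a) * (C a.1 a.2 * x (a.2, a.1)))
      = ∑ a ∈ ({(j, l), (l, j)} : Finset (Fin n × Fin n)),
          (starRingEnd ℂ) (x a) * (C a.1 a.2 * x (a.2, a.1)) := by
    refine (Finset.sum_subset (Finset.subset_univ _) fun a _ ha => ?_).symm
    simp only [Finset.mem_insert, Finset.mem_singleton, not_or] at ha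
    simp [hx, ha.1, ha.2]
  rw [hsub, Finset.sum_pair hne] at hq
  simp only [hx, if_pos rfl, if_neg hne, if_neg hne.symm, _root_.map_one, one_mul, if_true,
    ite_true] at hq
  rw [hherm] at hq
  have hval : C j l * c + (starRingEnd ℂ) c * ((starRingEnd ℂ) (C j l) * 1)
      = -((Complex.normSq (C j l) : ℂ) * 2) := by
    rw [hc]
    simp only [map_neg, Complex.conj_conj, mul_one]
    rw [← Complex.mul_conj]
    ring
  rw [hval] at hq
  have h2 : Complex.normSq (C j l) ≤ 0 := by
    have h3 : (0 : ℂ) ≤ ((-(Complex.normSq (C j l) * 2) : ℝ) : ℂ) := by push_cast; exact hq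
    have := Complex.zero_le_real.mp h3
    linarith
  exact Complex.normSq_eq_zero.mp (le_antisymm h2 (Complex.normSq_nonneg _))

lemma key3 {n : ℕ} (C : Matrix (Fin n) (Fin n) ℂ)
    (ρ ρTB : Matrix (Fin n × Fin n) (Fin n × Fin n) ℂ)
    (hρa : ∀ a b, ρ a b = if a.2 = a.1 ∧ b.2 = b.1 then C a.1 b.1 else 0)
    (hTBa : ∀ a b, ρTB a b = if a.1 = b.2 ∧ a.2 = b.1 then C a.1 a.2 else 0)
    (hsep : Separable ρ) : ρTB.PosSemidef := by
  obtain ⟨m, q, a, b, hq0, -, -, -, hsum⟩ := hsep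
  have hPT : ∀ p r : Fin n × Fin n, ρTB p r = ρ (p.1, r.2) (r.1, p.2) := by
    intro p r
    rw [hTBa, hρa]
    by_cases h : p.1 = r.2 ∧ p.2 = r.1
    · rw [if_pos h, if_pos ⟨h.1.symm, h.2⟩]
      rw [h.2]
    · rw [if_neg h, if_neg (fun hh => h ⟨hh.1.symm, hh.2⟩)]
  have hTBeq : ρTB = ∑ i, (q i : ℂ) •
      projOp (fun p : Fin n × Fin n => a i p.1 * (starRingEnd ℂ) (b i p.2)) := by
    ext p r
    rw [hPT p r, hsum]
    simp only [Matrix.sum_apply, Matrix.smul_apply, projOp, vecMulVec_apply, Pi.star_apply,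
      RCLike.star_def, _root_.map_mul, conj_conj, smul_eq_mul]
    refine Finset.sum_congr rfl fun i _ => ?_
    ring
  rw [hTBeq]
  exact psd_sum _ _ fun i _ => psd_smul (projOp_posSemidef _) (hq0 i)

lemma key2 {n : ℕ} (C : Matrix (Fin n) (Fin n) ℂ)
    (ρ : Matrix (Fin n × Fin n) (Fin n × Fin n) ℂ)
    (hρa : ∀ a b, ρ a b = if a.2 = a.1 ∧ b.2 = b.1 then C a.1 b.1 else 0)
    (hpsd : ρ.PosSemidef) (htr : ρ.trace = 1)
    (hdiag : ∀ j l, j ≠ l → C j l = 0) : Separable ρ := by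
  have hdnn : ∀ j : Fin n, 0 ≤ C j j := by
    intro j
    have h := hpsd.dotProduct_mulVec_nonneg (fun p => if p = (j, j) then 1 else 0)
    rw [quad_single ρ ((j, j) : Fin n × Fin n)] at h
    rwa [hρa, if_pos ⟨rfl, rfl⟩] at h
  have hre : ∀ j, C j j = (((C j j).re : ℝ) : ℂ) := by
    intro j
    have him := (Complex.le_def.mp (hdnn j)).2
    exact Complex.ext (by simp) (by simp [← him])
  have htrC : ∑ j, C j j = 1 := by
    have h : ρ.trace = ∑ j, C j j := by
      simp [Matrix.trace, Matrix.diag, hρa, Fintype.sum_prod_type]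
    rw [← h, htr]
  refine ⟨n, fun j => (C j j).re, fun j k => if k = j then 1 else 0,
    fun j k => if k = j then 1 else 0, ?_, ?_, ?_, ?_, ?_⟩
  · intro j
    have := Complex.le_def.mp (hdnn j)
    simpa using this.1
  · have h := congrArg Complex.re htrC
    rw [Complex.re_sum] at h
    simpa using h
  · intro i; simp [apply_ite Complex.normSq, Finset.sum_ite_eq']
  · intro i; simp [apply_ite Complex.normSq, Finset.sum_ite_eq']
  · ext pp rr
    obtain ⟨p1, p2⟩ := pp
    obtain ⟨r1, r2⟩ := rr
    rw [hρa]
    simp only [Matrix.sum_apply, Matrix.smul_apply, projOp, vecMulVec_apply, Pi.star_apply,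
      RCLike.star_def, _root_.map_mul, smul_eq_mul, apply_ite (starRingEnd ℂ),
      _root_.map_one, map_zero]
    by_cases h : p2 = p1 ∧ r2 = r1
    · obtain ⟨h1, h2⟩ := h
      rw [if_pos ⟨h1, h2⟩]
      by_cases hpr : r1 = p1
      · rw [hpr, Fintype.sum_eq_single p1]
        · simp [h1, h2, hpr, ← hre]
        · intro j hj
          simp [Ne.symm hj]
      · rw [hdiag p1 r1 (Ne.symm hpr)]
        refine (Finset.sum_eq_zero fun j _ => ?_).symm
        by_cases e1 : p1 = j <;> by_cases e3 : r1 = j <;> simp [e1, e3]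
        exact absurd (e3.trans e1.symm) hpr
    · rw [if_neg h]
      refine (Finset.sum_eq_zero fun j _ => ?_).symm
      by_cases e1 : p1 = j <;> by_cases e2 : p2 = j <;> by_cases e3 : r1 = j <;>
        by_cases e4 : r2 = j <;> simp [e1, e2, e3, e4]
      exact absurd ⟨e2.trans e1.symm, e4.trans e3.symm⟩ h

end Helpers

/-- for a Schmidt-correlated state ρ = Σ_{j,l} C_{jl}|e_j f_j⟩⟨e_l f_l|,
the partial transpose ρ^{T_B} = Σ_{j,l} C_{jl}|e_j f_l⟩⟨e_l f_j| is positive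
semidefinite iff C is diagonal, and this holds iff ρ is separable: PPT ⟺ separability
for Schmidt-correlated states. -/
theorem schmidt_correlated_PPT_iff_separable {n : ℕ}
    (C : Matrix (Fin n) (Fin n) ℂ)
    (ρ ρTB : Matrix (Fin n × Fin n) (Fin n × Fin n) ℂ)
    (hρ : ρ = ∑ j : Fin n, ∑ l : Fin n, C j l • single (j, j) (l, l) (1 : ℂ))
    (hpsd : ρ.PosSemidef) (htr : ρ.trace = 1)
    (hTB : ρTB = ∑ j : Fin n, ∑ l : Fin n, C j l • single (j, l) (l, j) (1 : ℂ)) :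
    (ρTB.PosSemidef ↔ ∀ j l, j ≠ l → C j l = 0) ∧
    (ρTB.PosSemidef ↔ Separable ρ) := by
  have hρa : ∀ a b, ρ a b = if a.2 = a.1 ∧ b.2 = b.1 then C a.1 b.1 else 0 := by
    intro a b; rw [hρ]; exact rho_apply C a b
  have hTBa : ∀ a b, ρTB a b = if a.1 = b.2 ∧ a.2 = b.1 then C a.1 a.2 else 0 := by
    intro a b; rw [hTB]; exact rhoTB_apply C a b
  refine ⟨⟨key1 C ρTB hTBa, fun h => key3 C ρ ρTB hρa hTBa (key2 C ρ hρa hpsd htr h)⟩,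
    ⟨fun h => key2 C ρ hρa hpsd htr (key1 C ρTB hTBa h), key3 C ρ ρTB hρa hTBa⟩⟩
end

section
/- Let ρ be a Schmidt-correlated state with respect to the orthonormal product basis {|e_j f_j⟩}, and let {(p_k, |ψ_k⟩)}_{k=1}^K be any ensemble of ρ with |ψ_k⟩ = Σ_j α_{j,k} |e_j f_j⟩. Then ρ is separable if and only if Σ_{k=1}^K p_k α_{j,k} α_{l,k}^* = 0 for all j ≠ l. -/
open Matrix Complex BigOperators
open scoped ComplexOrder

/-- a Schmidt-correlated state ρ = Σ_k p_k |ψ_k⟩⟨ψ_k|, with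
|ψ_k⟩ = Σ_j α_{j,k}|e_j f_j⟩, is separable iff Σ_k p_k α_{j,k} α_{l,k}^* = 0 for all
j ≠ l. -/
theorem schmidt_correlated_ensemble_separable_iff {n K : ℕ}
    (p : Fin K → ℝ) (hp : ∀ k, 0 < p k) (hps : ∑ k, p k = 1)
    (α : Fin n → Fin K → ℂ)
    (hα : ∀ k, ∑ j, Complex.normSq (α j k) = 1)
    (ρ : Matrix (Fin n × Fin n) (Fin n × Fin n) ℂ)
    (hρ : ρ = ∑ k, (p k : ℂ) •
      projOp (fun q : Fin n × Fin n => if q.1 = q.2 then α q.1 k else 0)) :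
    Separable ρ ↔ ∀ j l, j ≠ l → ∑ k, (p k : ℂ) * α j k * star (α l k) = 0 := by
  have hρ' : ∀ j j' l l', ρ (j, j') (l, l') =
      ∑ k, (p k : ℂ) * ((if j = j' then α j k else 0) * star (if l = l' then α l k else 0)) := by
    intro j j' l l'
    simp [hρ, Matrix.sum_apply, projOp, vecMulVec_apply]
  constructor
  · rintro ⟨m, q, a, b, hq, hqs, ha, hb, hE⟩ j l hjl
    have hE' : ∀ x y : Fin n × Fin n, ρ x y =
        ∑ i, (q i : ℂ) * ((a i x.1 * b i x.2) * star (a i y.1 * b i y.2)) := by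
      intro x y
      simp [hE, Matrix.sum_apply, projOp, vecMulVec_apply]
    have h1 : ∑ i, (q i : ℝ) * Complex.normSq (a i j * b i l) = 0 := by
      have h0 : ρ (j, l) (j, l) = 0 := by
        rw [hρ' j l j l]; simp [hjl]
      have hc := (hE' (j, l) (j, l)).symm.trans h0
      have h2 : (((∑ i, (q i : ℝ) * Complex.normSq (a i j * b i l)) : ℝ) : ℂ) = 0 := by
        push_cast
        rw [← hc]
        refine Finset.sum_congr rfl fun i _ => ?_
        rw [Complex.star_def, Complex.mul_conj]
      exact_mod_cast h2
    have h2 : ∀ i, (q i : ℝ) * Complex.normSq (a i j * b i l) = 0 := by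
      intro i
      exact (Finset.sum_eq_zero_iff_of_nonneg (fun i _ =>
        mul_nonneg (hq i) (Complex.normSq_nonneg _))).mp h1 i (Finset.mem_univ i)
    have key : ρ (j, j) (l, l) = 0 := by
      rw [hE' (j, j) (l, l)]
      refine Finset.sum_eq_zero fun i _ => ?_
      rcases mul_eq_zero.mp (h2 i) with hq0 | hn0
      · simp [hq0]
      · have hz : a i j * b i l = 0 := Complex.normSq_eq_zero.mp hn0
        rcases mul_eq_zero.mp hz with hz | hz
        · simp [hz]
        · simp only [star_mul', hz, star_zero]
          ring
    rw [hρ' j j l l] at key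
    simpa [mul_assoc] using key
  · intro h
    refine ⟨n, fun j => ∑ k, p k * Complex.normSq (α j k),
      fun i j => if i = j then 1 else 0, fun i j => if i = j then 1 else 0,
      fun i => Finset.sum_nonneg fun k _ => mul_nonneg (hp k).le (Complex.normSq_nonneg _),
      ?_, ?_, ?_, ?_⟩
    · rw [Finset.sum_comm]
      simp_rw [← Finset.mul_sum, hα]
      simpa using hps
    · intro i
      simp [apply_ite Complex.normSq]
    · intro i
      simp [apply_ite Complex.normSq]
    · ext ⟨j, j'⟩ ⟨l, l'⟩
      rw [hρ' j j' l l']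
      simp only [Matrix.sum_apply, Matrix.smul_apply, projOp, vecMulVec_apply, Pi.star_apply,
        smul_eq_mul]
      have hterm : ∀ x : Fin n,
          ((∑ k, p k * Complex.normSq (α x k) : ℝ) : ℂ) *
            (((if x = j then (1:ℂ) else 0) * if x = j' then (1:ℂ) else 0) *
              star ((if x = l then (1:ℂ) else 0) * if x = l' then (1:ℂ) else 0)) =
          if x = j ∧ x = j' ∧ x = l ∧ x = l' then
            ((∑ k, p k * Complex.normSq (α x k) : ℝ) : ℂ) else 0 := by
        intro x
        by_cases h1 : x = j
        · by_cases h2 : x = j'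
          · by_cases h3 : x = l
            · by_cases h4 : x = l'
              · subst h1; subst h2; subst h3; subst h4; simp
              · simp [h4]
            · simp [h3]
          · simp [h2]
        · simp [h1]
      rw [Finset.sum_congr rfl fun x _ => hterm x]
      by_cases hjj : j = j'
      · subst hjj
        by_cases hll : l = l'
        · subst hll
          by_cases hjl : j = l
          · subst hjl
            have hcond : ∀ x : Fin n, (x = j ∧ x = j ∧ x = j ∧ x = j) ↔ x = j := by
              intro x; tauto
            simp_rw [hcond]
            rw [Finset.sum_ite_eq' Finset.univ j]
            simp only [Finset.mem_univ, if_true]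
            push_cast
            refine Finset.sum_congr rfl fun k _ => ?_
            simp [Complex.star_def, Complex.mul_conj]
          · rw [Finset.sum_eq_zero fun x _ =>
              if_neg (by rintro ⟨rfl, -, rfl, -⟩; exact hjl rfl)]
            simpa [mul_assoc] using h j l hjl
        · rw [Finset.sum_eq_zero fun x _ =>
            if_neg (by rintro ⟨-, -, rfl, rfl⟩; exact hll rfl)]
          simp [hll]
      · rw [Finset.sum_eq_zero fun x _ =>
          if_neg (by rintro ⟨rfl, rfl, -⟩; exact hjj rfl)]
        simp [hjj]
end

section
/- Schrödinger's mixture theorem: Let ρ = Σ_{k=1}^n λ_k |ψ_k⟩⟨ψ_k| be the spectral decomposition of a density matrix (λ_k ≥ 0, {|ψ_k⟩} orthonormal). If {(q_s, |φ_s⟩)}_{s=1}^S is any ensemble of ρ with q_s > 0, then there exists an S×S unitary matrix U such that √(q_s) |φ_s⟩ = Σ_{k=1}^n U_{sk} √(λ_k) |ψ_k⟩ for all s (where the sum ranges over k with λ_k appearing, padding with zeros as needed if S > n). -/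
open Matrix Complex BigOperators
open scoped ComplexOrder

namespace SchroedingerAux

noncomputable def ip {d : ℕ} (a b : Fin d → ℂ) : ℂ := ∑ x, (starRingEnd ℂ) (a x) * b x

lemma ip_conj {d : ℕ} (a b : Fin d → ℂ) : (starRingEnd ℂ) (ip a b) = ip b a := by
  simp [ip, map_sum, mul_comm]

lemma ip_self {d : ℕ} (a : Fin d → ℂ) : ip a a = ((∑ x, Complex.normSq (a x) : ℝ) : ℂ) := by
  simp [ip, Complex.normSq_eq_conj_mul_self]

lemma sum_fin_le {M : Type*} [AddCommMonoid M] {S N : ℕ} (h : S ≤ N) (f : Fin S → M) :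
    ∑ i : Fin N, (if hi : (i : ℕ) < S then f ⟨i, hi⟩ else 0) = ∑ s, f s := by
  set g : ℕ → M := fun i => if hi : i < S then f ⟨i, hi⟩ else 0 with hg
  have h1 : ∑ i : Fin N, (if hi : (i : ℕ) < S then f ⟨i, hi⟩ else 0)
      = ∑ i ∈ Finset.range N, g i := by
    rw [← Fin.sum_univ_eq_sum_range]
  have h2 : ∑ i ∈ Finset.range N, g i = ∑ i ∈ Finset.range S, g i := by
    refine (Finset.sum_subset (by simpa using Finset.range_subset_range.mpr h) ?_).symm
    intro x _ hx
    simp only [Finset.mem_range, not_lt] at hx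
    simp [hg, Nat.not_lt.mpr hx]
  have h3 : ∑ i ∈ Finset.range S, g i = ∑ s : Fin S, f s := by
    rw [← Fin.sum_univ_eq_sum_range]
    exact Finset.sum_congr rfl fun i _ => by simp [hg, i.isLt]
  rw [h1, h2, h3]

lemma sandwich {d : ℕ} {ι : Type*} [Fintype ι] (c : ι → ℝ) (χ : ι → Fin d → ℂ)
    (w v : Fin d → ℂ) :
    ∑ i, ∑ j, (starRingEnd ℂ) (w i) * ((∑ t, (c t : ℂ) • projOp (χ t)) i j) * v j
      = ∑ t, (c t : ℂ) * (starRingEnd ℂ) (ip (χ t) w) * ip (χ t) v := by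
  simp only [ip, Matrix.sum_apply, Matrix.smul_apply, projOp, vecMulVec_apply, Pi.star_apply,
    smul_eq_mul, map_sum, _root_.map_mul, RingHom.id_apply, Complex.conj_conj, Finset.mul_sum,
    Finset.sum_mul, RCLike.star_def]
  conv_rhs => rw [Finset.sum_comm]
  rw [Finset.sum_comm]
  refine Finset.sum_congr rfl fun x1 _ => ?_
  rw [Finset.sum_comm]
  exact Finset.sum_congr rfl fun t _ => Finset.sum_congr rfl fun x _ => by ring

end SchroedingerAux

open SchroedingerAux

/-- Schrödinger's mixture theorem: let ρ = Σ_{k=1}^n λ_k |ψ_k⟩⟨ψ_k| be a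
spectral decomposition of a density matrix (λ_k ≥ 0, {|ψ_k⟩} orthonormal), and let
{(q_s, |φ_s⟩)}_{s=1}^S be any ensemble of ρ with q_s > 0.  Then, after padding the
spectral family with zeros up to size N = max n S, there is an N×N unitary U with
√q_s |φ_s⟩ = Σ_k U_{sk} √λ_k |ψ_k⟩ for all s. -/
theorem schroedinger_mixture_theorem {d n S : ℕ}
    (lam : Fin n → ℝ) (hlam : ∀ k, 0 ≤ lam k)
    (ψ : Fin n → (Fin d → ℂ))
    (hortho : ∀ k k', ∑ x, star (ψ k x) * ψ k' x = if k = k' then 1 else 0)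
    (ρ : Matrix (Fin d) (Fin d) ℂ)
    (hρ : ρ = ∑ k, (lam k : ℂ) • projOp (ψ k))
    (q : Fin S → ℝ) (hq : ∀ s, 0 < q s) (hqs : ∑ s, q s = 1)
    (φ : Fin S → (Fin d → ℂ))
    (hφ : ∀ s, ∑ x, Complex.normSq (φ s x) = 1)
    (hens : ρ = ∑ s, (q s : ℂ) • projOp (φ s)) :
    ∃ U : Matrix (Fin (max n S)) (Fin (max n S)) ℂ,
      U ∈ Matrix.unitaryGroup (Fin (max n S)) ℂ ∧
      ∀ s : Fin S,
        (Real.sqrt (q s) : ℂ) • φ s =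
          ∑ k : Fin (max n S),
            U (Fin.castLE (le_max_right n S) s) k •
              (if h : (k : ℕ) < n then (Real.sqrt (lam ⟨k, h⟩) : ℂ) • ψ ⟨k, h⟩ else 0) := by
  classical
  -- orthonormality in `ip` form
  have horth' : ∀ k k', ip (ψ k) (ψ k') = if k = k' then 1 else 0 := by
    intro k k'
    simpa [ip, Complex.star_def] using hortho k k'
  -- the key identity
  have key : ∀ w v : Fin d → ℂ,
      ∑ k, (lam k : ℂ) * (starRingEnd ℂ) (ip (ψ k) w) * ip (ψ k) v
        = ∑ s, (q s : ℂ) * (starRingEnd ℂ) (ip (φ s) w) * ip (φ s) v := by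
    intro w v
    have h1 := sandwich lam ψ w v
    have h2 := sandwich q φ w v
    rw [← hρ] at h1
    rw [← hens] at h2
    exact h1.symm.trans h2
  -- vanishing of ensemble components
  have F2 : ∀ v : Fin d → ℂ,
      (∑ k, (lam k : ℂ) * (starRingEnd ℂ) (ip (ψ k) v) * ip (ψ k) v) = 0 →
      ∀ s, ip (φ s) v = 0 := by
    intro v hv s
    have h := (key v v).symm.trans hv
    have h' : ∑ t, ((q t * Complex.normSq (ip (φ t) v) : ℝ) : ℂ) = 0 := by
      rw [← h]
      refine Finset.sum_congr rfl fun t _ => ?_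
      push_cast [Complex.normSq_eq_conj_mul_self]
      ring
    rw [← Complex.ofReal_sum] at h'
    have hr : ∑ t, q t * Complex.normSq (ip (φ t) v) = 0 := by exact_mod_cast h'
    have hterm : q s * Complex.normSq (ip (φ s) v) = 0 := by
      have := (Finset.sum_eq_zero_iff_of_nonneg (fun t _ =>
        mul_nonneg (hq t).le (Complex.normSq_nonneg _))).mp hr s (Finset.mem_univ s)
      exact this
    have : Complex.normSq (ip (φ s) v) = 0 := by
      rcases mul_eq_zero.mp hterm with h | h
      · exact absurd h (hq s).ne'
      · exact h
    exact Complex.normSq_eq_zero.mp this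
  -- zero eigenvalue ⇒ zero overlap
  have F3 : ∀ k, lam k = 0 → ∀ s, ip (ψ k) (φ s) = 0 := by
    intro k hk s
    have h0 : (∑ k', (lam k' : ℂ) * (starRingEnd ℂ) (ip (ψ k') (ψ k)) * ip (ψ k') (ψ k)) = 0 := by
      rw [Finset.sum_eq_single k]
      · simp [horth', hk]
      · intro k' _ hkk
        simp [horth', hkk]
      · simp
    have := F2 (ψ k) h0 s
    rw [← ip_conj]
    rw [this]
    simp
  -- the coefficients
  set a : Fin S → Fin n → ℂ := fun s k => (Real.sqrt (q s) : ℂ) * ip (ψ k) (φ s) with ha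
  -- expansion: √q_s φ_s = Σ_k a s k ψ_k
  have F4 : ∀ s x, (Real.sqrt (q s) : ℂ) * φ s x = ∑ k, a s k * ψ k x := by
    intro s x₀
    set v : Fin d → ℂ := fun x => (Real.sqrt (q s) : ℂ) * φ s x - ∑ k, a s k * ψ k x with hv
    -- ip of ψ j with v
    have h1 : ∀ j, ip (ψ j) v = 0 := by
      intro j
      have expand : ip (ψ j) v
          = (Real.sqrt (q s) : ℂ) * ip (ψ j) (φ s) - ∑ k, a s k * ip (ψ j) (ψ k) := by
        simp only [ip, hv, mul_sub, Finset.sum_sub_distrib, Finset.mul_sum]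
        congr 1
        · exact Finset.sum_congr rfl fun x _ => by ring
        · rw [Finset.sum_comm]
          refine Finset.sum_congr rfl fun k _ => ?_
          exact Finset.sum_congr rfl fun x _ => by ring
      rw [expand]
      rw [Finset.sum_eq_single j]
      · simp [horth', ha]
      · intro k _ hkj
        simp [horth', (Ne.symm hkj)]
      · simp
    have h2 : (∑ k, (lam k : ℂ) * (starRingEnd ℂ) (ip (ψ k) v) * ip (ψ k) v) = 0 := by
      refine Finset.sum_eq_zero fun k _ => ?_
      rw [h1 k]
      simp
    have h3 : ∀ t, ip (φ t) v = 0 := F2 v h2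
    have h4 : ip v v = 0 := by
      have expand : ip v v
          = (Real.sqrt (q s) : ℂ) * ip v (φ s) - ∑ k, a s k * ip v (ψ k) := by
        simp only [ip, hv, mul_sub, Finset.sum_sub_distrib, Finset.mul_sum]
        congr 1
        · exact Finset.sum_congr rfl fun x _ => by ring
        · rw [Finset.sum_comm]
          refine Finset.sum_congr rfl fun k _ => ?_
          exact Finset.sum_congr rfl fun x _ => by ring
      rw [expand]
      have e1 : ip v (φ s) = 0 := by rw [← ip_conj, h3 s]; simp
      have e2 : ∀ k, ip v (ψ k) = 0 := fun k => by rw [← ip_conj, h1 k]; simp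
      simp [e1, e2]
    have h5 : ∀ x, v x = 0 := by
      rw [ip_self] at h4
      have hr : ∑ x, Complex.normSq (v x) = 0 := by exact_mod_cast h4
      intro x
      have := (Finset.sum_eq_zero_iff_of_nonneg (fun x _ =>
        Complex.normSq_nonneg (v x))).mp hr x (Finset.mem_univ x)
      exact Complex.normSq_eq_zero.mp this
    have h6 : (Real.sqrt (q s) : ℂ) * φ s x₀ - ∑ k, a s k * ψ k x₀ = 0 := h5 x₀
    exact sub_eq_zero.mp h6
  -- Gram condition
  have F5 : ∀ j k, (∑ s, a s j * (starRingEnd ℂ) (a s k))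
      = if j = k then (lam j : ℂ) else 0 := by
    intro j k
    have h := key (ψ j) (ψ k)
    have hL : ∑ k', (lam k' : ℂ) * (starRingEnd ℂ) (ip (ψ k') (ψ j)) * ip (ψ k') (ψ k)
        = if j = k then (lam j : ℂ) else 0 := by
      rw [Finset.sum_eq_single j]
      · by_cases hjk : j = k <;> simp [horth', hjk]
      · intro k' _ hk'
        simp [horth', hk']
      · simp
    have hR : ∑ s, (q s : ℂ) * (starRingEnd ℂ) (ip (φ s) (ψ j)) * ip (φ s) (ψ k)
        = ∑ s, a s j * (starRingEnd ℂ) (a s k) := by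
      refine Finset.sum_congr rfl fun s _ => ?_
      have e1 : (starRingEnd ℂ) (ip (φ s) (ψ j)) = ip (ψ j) (φ s) := ip_conj _ _
      have e2 : ip (φ s) (ψ k) = (starRingEnd ℂ) (ip (ψ k) (φ s)) := (ip_conj _ _).symm
      rw [e1, e2, ha]
      simp only [_root_.map_mul, Complex.conj_ofReal]
      have hqsq : ((q s : ℝ) : ℂ) = (Real.sqrt (q s) : ℂ) * (Real.sqrt (q s) : ℂ) := by
        rw [← Complex.ofReal_mul, Real.mul_self_sqrt (hq s).le]
      rw [hqsq]; ring
    rw [hL, hR] at h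
    exact h.symm
  -- construction of the unitary
  have hSN : S ≤ max n S := le_max_right n S
  have hnN : n ≤ max n S := le_max_left n S
  set vcol : Fin (max n S) → EuclideanSpace ℂ (Fin (max n S)) := fun k =>
    (WithLp.toLp 2 (fun j : Fin (max n S) => if hj : (j : ℕ) < S then
        (if hk : (k : ℕ) < n then a ⟨j, hj⟩ ⟨k, hk⟩ / (Real.sqrt (lam ⟨k, hk⟩) : ℂ) else 0)
      else 0) : EuclideanSpace ℂ (Fin (max n S))) with hvcol
  set T : Set (Fin (max n S)) := {k | ∃ hk : (k : ℕ) < n, 0 < lam ⟨k, hk⟩} with hT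
  have horthT : Orthonormal ℂ (T.restrict vcol) := by
    rw [orthonormal_iff_ite]
    rintro ⟨i, hin, hipos⟩ ⟨j, hjn, hjpos⟩
    simp only [Set.restrict_apply, Subtype.mk.injEq]
    change inner ℂ (vcol i) (vcol j) = _
    have hsum : ∀ l : Fin (max n S), (starRingEnd ℂ) (vcol i l) * vcol j l
        = if hl : (l : ℕ) < S then
            (starRingEnd ℂ) (a ⟨l, hl⟩ ⟨i, hin⟩ / (Real.sqrt (lam ⟨i, hin⟩) : ℂ))
              * (a ⟨l, hl⟩ ⟨j, hjn⟩ / (Real.sqrt (lam ⟨j, hjn⟩) : ℂ)) else 0 := by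
      intro l
      by_cases hl : (l : ℕ) < S <;> simp [hvcol, hl, hin, hjn]
    have hinner : (inner ℂ (vcol i) (vcol j) : ℂ)
        = (∑ s, (starRingEnd ℂ) (a s ⟨i, hin⟩) * a s ⟨j, hjn⟩)
            / ((Real.sqrt (lam ⟨i, hin⟩) : ℂ) * (Real.sqrt (lam ⟨j, hjn⟩) : ℂ)) := by
      rw [PiLp.inner_apply]
      simp only [RCLike.inner_apply']
      rw [Finset.sum_congr rfl (fun l _ => hsum l),
        sum_fin_le hSN (fun t : Fin S =>
          (starRingEnd ℂ) (a t ⟨i, hin⟩ / (Real.sqrt (lam ⟨i, hin⟩) : ℂ))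
            * (a t ⟨j, hjn⟩ / (Real.sqrt (lam ⟨j, hjn⟩) : ℂ))), Finset.sum_div]
      refine Finset.sum_congr rfl fun t _ => ?_
      rw [map_div₀, Complex.conj_ofReal, div_mul_div_comm]
    have hgram : (∑ s, (starRingEnd ℂ) (a s ⟨i, hin⟩) * a s ⟨j, hjn⟩)
        = if (⟨i, hin⟩ : Fin n) = ⟨j, hjn⟩ then ((lam ⟨i, hin⟩ : ℝ) : ℂ) else 0 := by
      have h := F5 ⟨j, hjn⟩ ⟨i, hin⟩
      have hcomm : (∑ s, (starRingEnd ℂ) (a s ⟨i, hin⟩) * a s ⟨j, hjn⟩)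
          = ∑ s, a s ⟨j, hjn⟩ * (starRingEnd ℂ) (a s ⟨i, hin⟩) :=
        Finset.sum_congr rfl fun t _ => mul_comm _ _
      rw [hcomm, h]
      rcases eq_or_ne (⟨i, hin⟩ : Fin n) ⟨j, hjn⟩ with he | he
      · rw [if_pos he.symm, if_pos he, he]
      · rw [if_neg (Ne.symm he), if_neg he]
    by_cases hij : i = j
    · have hfe : (⟨i, hin⟩ : Fin n) = ⟨j, hjn⟩ := by simp [Fin.ext_iff, hij]
      have hle : lam ⟨j, hjn⟩ = lam ⟨i, hin⟩ := (congrArg lam hfe).symm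
      rw [hinner, hgram, if_pos hfe, if_pos hij]
      have hll : ((Real.sqrt (lam ⟨i, hin⟩) : ℂ) * (Real.sqrt (lam ⟨j, hjn⟩) : ℂ))
          = ((lam ⟨i, hin⟩ : ℝ) : ℂ) := by
        rw [hle, ← Complex.ofReal_mul]
        norm_cast
        exact Real.mul_self_sqrt hipos.le
      rw [hll, div_self]
      exact_mod_cast hipos.ne'
    · have hij' : (⟨i, hin⟩ : Fin n) ≠ ⟨j, hjn⟩ := by
        intro hcon
        exact hij (Fin.ext (congrArg (fun z : Fin n => (z : ℕ)) hcon))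
      rw [hinner, hgram, if_neg hij', zero_div, if_neg hij]
  obtain ⟨b, hb⟩ := horthT.exists_orthonormalBasis_extension_of_card_eq (by simp)
  refine ⟨Matrix.of (fun s k => b k s), ?_, ?_⟩
  · rw [Matrix.mem_unitaryGroup_iff']
    ext j k
    have hjk := orthonormal_iff_ite.mp b.orthonormal j k
    rw [PiLp.inner_apply] at hjk
    simp only [RCLike.inner_apply'] at hjk
    simp only [Matrix.mul_apply, Matrix.star_apply, Matrix.of_apply, Matrix.one_apply,
      RCLike.star_def]
    exact hjk
  · intro s
    funext x
    simp only [Finset.sum_apply, Pi.smul_apply, smul_eq_mul, Matrix.of_apply, dite_apply,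
      Pi.zero_apply]
    have hterm : ∀ k : Fin (max n S),
        b k (Fin.castLE hSN s) * (if h : (k : ℕ) < n
            then (Real.sqrt (lam ⟨k, h⟩) : ℂ) * ψ ⟨k, h⟩ x else 0)
          = if h : (k : ℕ) < n then a s ⟨k, h⟩ * ψ ⟨k, h⟩ x else 0 := by
      intro k
      by_cases hkn : (k : ℕ) < n
      · simp only [dif_pos hkn]
        by_cases hpos : 0 < lam ⟨k, hkn⟩
        · have hbk : b k = vcol k := hb k ⟨hkn, hpos⟩
          rw [hbk]
          have hval : vcol k (Fin.castLE hSN s)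
              = a s ⟨k, hkn⟩ / (Real.sqrt (lam ⟨k, hkn⟩) : ℂ) := by
            have hcs : ((Fin.castLE hSN s : Fin (max n S)) : ℕ) < S := by
              simpa using s.isLt
            simp only [hvcol]
            rw [dif_pos hcs, dif_pos hkn]
            have hs' : (⟨((Fin.castLE hSN s : Fin (max n S)) : ℕ), hcs⟩ : Fin S) = s :=
              Fin.ext (by simp)
            rw [hs']
          rw [hval]
          have hne : ((Real.sqrt (lam ⟨k, hkn⟩) : ℝ) : ℂ) ≠ 0 := by
            exact_mod_cast (Real.sqrt_pos.mpr hpos).ne'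
          field_simp
        · have h0 : lam ⟨k, hkn⟩ = 0 := le_antisymm (not_lt.mp hpos) (hlam _)
          have ha0 : a s ⟨k, hkn⟩ = 0 := by simp [ha, F3 _ h0 s]
          simp [h0, ha0]
      · simp [hkn]
    rw [Finset.sum_congr rfl (fun k _ => hterm k),
      sum_fin_le hnN (fun k : Fin n => a s k * ψ k x)]
    exact F4 s x
end

section
/- Let ρ = (1/n) Σ_{k=1}^n |ψ_k⟩⟨ψ_k| where |ψ_k⟩ = Σ_{j=1}^n a_j e^{iθ_{j,k}} |e_j f_j⟩, with a_j > 0 real, Σ_j a_j² = 1, and θ_{j,k} ∈ ℝ. Then ρ is separable if and only if the matrix (e^{iθ_{j,k}})_{1≤j,k≤n} is a complex Hadamard matrix (i.e. its rows are pairwise orthogonal in ℂ^n). -/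
open Matrix Complex BigOperators
open scoped ComplexOrder

/-- let ρ = (1/n) Σ_k |ψ_k⟩⟨ψ_k| with |ψ_k⟩ = Σ_j a_j e^{iθ_{j,k}}|e_j f_j⟩,
a_j > 0 and Σ_j a_j² = 1.  Then ρ is separable iff the matrix of phases
(e^{iθ_{j,k}}) is a complex Hadamard matrix. -/
theorem separable_iff_phase_matrix_hadamard {n : ℕ} (hn : 0 < n)
    (a : Fin n → ℝ) (ha : ∀ j, 0 < a j) (has : ∑ j, a j ^ 2 = 1)
    (θ : Fin n → Fin n → ℝ)
    (ρ : Matrix (Fin n × Fin n) (Fin n × Fin n) ℂ)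
    (hρ : ρ = ((n : ℂ))⁻¹ • ∑ k, projOp (fun p : Fin n × Fin n =>
      if p.1 = p.2 then (a p.1 : ℂ) * Complex.exp (θ p.1 k * Complex.I) else 0)) :
    Separable ρ ↔
      (Matrix.of fun j k : Fin n => Complex.exp (θ j k * Complex.I)) *
          (Matrix.of fun j k : Fin n => Complex.exp (θ j k * Complex.I))ᴴ =
        (n : ℂ) • (1 : Matrix (Fin n) (Fin n) ℂ) := by
  have hn0 : (n : ℂ) ≠ 0 := Nat.cast_ne_zero.mpr hn.ne'
  have hconj : ∀ j k : Fin n, (starRingEnd ℂ) (Complex.exp (θ j k * Complex.I))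
      = Complex.exp (-(θ j k * Complex.I)) := by
    intro j k
    rw [← Complex.exp_conj]
    congr 1
    simp [Complex.conj_ofReal]
  have hnorm : ∀ j k : Fin n, Complex.exp (θ j k * Complex.I) *
      (starRingEnd ℂ) (Complex.exp (θ j k * Complex.I)) = 1 := by
    intro j k
    rw [hconj, ← Complex.exp_add, add_neg_cancel, Complex.exp_zero]
  have hent : ∀ p q : Fin n × Fin n, ρ p q =
      (n : ℂ)⁻¹ * ∑ k, (if p.1 = p.2 then (a p.1 : ℂ) * Complex.exp (θ p.1 k * Complex.I) else 0) *
        (starRingEnd ℂ) (if q.1 = q.2 then (a q.1 : ℂ) * Complex.exp (θ q.1 k * Complex.I) else 0) := by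
    intro p q
    rw [hρ]
    simp only [Matrix.smul_apply, Matrix.sum_apply, projOp, Matrix.vecMulVec_apply,
      Pi.star_apply, smul_eq_mul, RCLike.star_def]
  have hdiag : ∀ j l : Fin n, ρ (j, j) (l, l) =
      (n : ℂ)⁻¹ * ((a j : ℂ) * (a l : ℂ) *
        ∑ k, Complex.exp (θ j k * Complex.I) * (starRingEnd ℂ) (Complex.exp (θ l k * Complex.I))) := by
    intro j l
    rw [hent (j, j) (l, l)]
    congr 1
    rw [Finset.mul_sum]
    refine Finset.sum_congr rfl fun k _ => ?_
    simp only [eq_self_iff_true, if_true, _root_.map_mul, Complex.conj_ofReal]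
    ring
  constructor
  · rintro ⟨m, q, A, B, hq0, hqs, hA, hB, hsum⟩
    have hzero : ∀ j l : Fin n, j ≠ l →
        (∑ k, Complex.exp (θ j k * Complex.I) *
          (starRingEnd ℂ) (Complex.exp (θ l k * Complex.I))) = 0 := by
      intro j l hjl
      have h1 : ρ (j, l) (j, l) = 0 := by
        rw [hent]
        simp [hjl]
      have h2 : ρ (j, l) (j, l) = ∑ i, ((q i * Complex.normSq (A i j * B i l) : ℝ) : ℂ) := by
        rw [hsum]
        simp only [Matrix.sum_apply, Matrix.smul_apply, projOp, Matrix.vecMulVec_apply,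
          Pi.star_apply, smul_eq_mul, RCLike.star_def]
        refine Finset.sum_congr rfl fun i _ => ?_
        rw [Complex.mul_conj]
        push_cast
        ring
      have h3 : (∑ i, q i * Complex.normSq (A i j * B i l)) = 0 := by
        have h := h2.symm.trans h1
        rw [← Complex.ofReal_sum] at h
        exact_mod_cast h
      have h4 : ∀ i, q i * Complex.normSq (A i j * B i l) = 0 := fun i =>
        (Finset.sum_eq_zero_iff_of_nonneg (fun i _ =>
          mul_nonneg (hq0 i) (Complex.normSq_nonneg _))).1 h3 i (Finset.mem_univ i)
      have h5 : ρ (j, j) (l, l) = 0 := by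
        rw [hsum]
        simp only [Matrix.sum_apply, Matrix.smul_apply, projOp, Matrix.vecMulVec_apply,
          Pi.star_apply, smul_eq_mul, RCLike.star_def]
        refine Finset.sum_eq_zero fun i _ => ?_
        rcases mul_eq_zero.1 (h4 i) with h | h
        · simp [h]
        · rcases mul_eq_zero.1 (Complex.normSq_eq_zero.1 h) with h' | h'
          · simp [h']
          · simp [h']
      have h6 : (n : ℂ)⁻¹ * ((a j : ℂ) * (a l : ℂ) *
          ∑ k, Complex.exp (θ j k * Complex.I) *
            (starRingEnd ℂ) (Complex.exp (θ l k * Complex.I))) = 0 :=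
        (hdiag j l).symm.trans h5
      have haj : (a j : ℂ) ≠ 0 := Complex.ofReal_ne_zero.mpr (ha j).ne'
      have hal : (a l : ℂ) ≠ 0 := Complex.ofReal_ne_zero.mpr (ha l).ne'
      have h7 := (mul_eq_zero.1 h6).resolve_left (inv_ne_zero hn0)
      exact (mul_eq_zero.1 h7).resolve_left (mul_ne_zero haj hal)
    ext j l
    simp only [Matrix.mul_apply, Matrix.conjTranspose_apply, Matrix.of_apply,
      Matrix.smul_apply, Matrix.one_apply, smul_eq_mul, RCLike.star_def]
    by_cases hjl : j = l
    · subst hjl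
      rw [if_pos rfl, mul_one]
      rw [Finset.sum_congr rfl fun k _ => hnorm j k]
      simp
    · rw [if_neg hjl, mul_zero]
      exact hzero j l hjl
  · intro hH
    have hS : ∀ j l : Fin n, (∑ k, Complex.exp (θ j k * Complex.I) *
        (starRingEnd ℂ) (Complex.exp (θ l k * Complex.I))) = if j = l then (n : ℂ) else 0 := by
      intro j l
      have h := congrFun (congrFun hH j) l
      simp only [Matrix.mul_apply, Matrix.conjTranspose_apply, Matrix.of_apply,
        Matrix.smul_apply, Matrix.one_apply, smul_eq_mul, RCLike.star_def] at h
      rw [h]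
      split <;> simp
    have hclosed : ∀ p q : Fin n × Fin n,
        ρ p q = if p.1 = p.2 ∧ q.1 = q.2 ∧ p.1 = q.1 then ((a p.1 : ℂ)) ^ 2 else 0 := by
      rintro ⟨p1, p2⟩ ⟨q1, q2⟩
      by_cases h1 : p1 = p2
      · by_cases h2 : q1 = q2
        · subst h1; subst h2
          rw [hdiag p1 q1, hS]
          by_cases h3 : p1 = q1
          · subst h3
            simp only [if_pos rfl, and_self, if_pos]
            field_simp
          · simp [h3]
        · rw [hent]
          simp [h2]
      · rw [hent]
        simp [h1]
    refine ⟨n, fun i => a i ^ 2, fun i j => if i = j then 1 else 0,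
      fun i j => if i = j then 1 else 0, fun i => sq_nonneg _, has, ?_, ?_, ?_⟩
    · intro i
      simp [apply_ite Complex.normSq]
    · intro i
      simp [apply_ite Complex.normSq]
    · ext p q
      rw [hclosed p q]
      simp only [Matrix.sum_apply, Matrix.smul_apply, projOp, Matrix.vecMulVec_apply,
        Pi.star_apply, smul_eq_mul, RCLike.star_def, _root_.map_mul]
      simp only [apply_ite (starRingEnd ℂ), _root_.map_one, _root_.map_zero, mul_ite, ite_mul,
        mul_one, mul_zero, one_mul, zero_mul]
      simp only [Finset.sum_ite_eq', Finset.mem_univ, if_true]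
      push_cast
      obtain ⟨p1, p2⟩ := p
      obtain ⟨q1, q2⟩ := q
      have hfst : ∀ x y : Fin n, ((x, y) : Fin n × Fin n).1 = x := fun _ _ => rfl
      have hsnd : ∀ x y : Fin n, ((x, y) : Fin n × Fin n).2 = y := fun _ _ => rfl
      simp only [hfst, hsnd]
      rw [← ite_and, ← ite_and]
      have hiff : (p1 = p2 ∧ q1 = q2 ∧ p1 = q1) ↔ ((q2 = q1 ∧ q2 = p2) ∧ q2 = p1) := by
        constructor
        · rintro ⟨h1, h2, h3⟩
          exact ⟨⟨h2.symm, h2.symm.trans (h3.symm.trans h1)⟩, h2.symm.trans h3.symm⟩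
        · rintro ⟨⟨h1, h2⟩, h3⟩
          exact ⟨h3.symm.trans h2, h1.symm, h3.symm.trans h1⟩
      by_cases h : (q2 = q1 ∧ q2 = p2) ∧ q2 = p1
      · rw [if_pos (hiff.2 h), if_pos h, h.2]
      · rw [if_neg (fun hc => h (hiff.1 hc)), if_neg h]
end

section
/- For each s ∈ {1,…,n}, let (e^{iφ^s_{j,l}})_{1≤j,l≤n} be a complex Hadamard matrix, and define |ψ_l^s⟩ = (1/√n) Σ_{j=1}^n e^{iφ^s_{j,l}} |j⟩ ⊗ |j+s−1 mod n⟩ for 1 ≤ l ≤ n. Then the n² vectors {|ψ_l^s⟩ : 1 ≤ l, s ≤ n} form an orthonormal basis of ℂ^n ⊗ ℂ^n. -/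
open Matrix Complex BigOperators

/-- for each shift s let (e^{iφ^s_{j,l}}) be a complex Hadamard matrix and
let |ψ_l^s⟩ = (1/√n) Σ_j e^{iφ^s_{j,l}} |j⟩⊗|j+s⟩ (indices mod n).  Then the n²
vectors {|ψ_l^s⟩} form an orthonormal basis of ℂ^n ⊗ ℂ^n. -/
theorem generalized_bell_states_orthonormal_basis {n : ℕ} [NeZero n]
    (φ : ZMod n → ZMod n → ZMod n → ℝ)
    (hHad : ∀ s : ZMod n,
      (Matrix.of fun j l : ZMod n => Complex.exp (φ s j l * Complex.I)) *
          (Matrix.of fun j l : ZMod n => Complex.exp (φ s j l * Complex.I))ᴴ =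
        (n : ℂ) • (1 : Matrix (ZMod n) (ZMod n) ℂ))
    (ψ : ZMod n → ZMod n → (ZMod n × ZMod n → ℂ))
    (hψ : ∀ s l, ψ s l = fun p =>
      if p.2 = p.1 + s then ((Real.sqrt n : ℝ) : ℂ)⁻¹ * Complex.exp (φ s p.1 l * Complex.I)
      else 0) :
    (∀ s l s' l', ∑ p : ZMod n × ZMod n, star (ψ s l p) * ψ s' l' p =
      if s = s' ∧ l = l' then 1 else 0) ∧
    Submodule.span ℂ (Set.range fun sl : ZMod n × ZMod n => ψ sl.1 sl.2) = ⊤ := by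
  have hn : (n : ℂ) ≠ 0 := Nat.cast_ne_zero.2 (NeZero.ne n)
  have hnR : (0:ℝ) ≤ n := Nat.cast_nonneg n
  -- column orthogonality
  have h2 : ∀ s : ZMod n, (Matrix.of fun j l : ZMod n => Complex.exp (φ s j l * Complex.I))ᴴ *
      (Matrix.of fun j l : ZMod n => Complex.exp (φ s j l * Complex.I)) =
      (n : ℂ) • (1 : Matrix (ZMod n) (ZMod n) ℂ) := by
    intro s
    set M := Matrix.of fun j l : ZMod n => Complex.exp (φ s j l * Complex.I) with hM
    have h1 : M * ((n:ℂ)⁻¹ • Mᴴ) = 1 := by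
      rw [Matrix.mul_smul, hHad s, smul_smul, inv_mul_cancel₀ hn, one_smul]
    have h1' := mul_eq_one_comm.mp h1
    rw [Matrix.smul_mul] at h1'
    calc Mᴴ * M = (n:ℂ) • ((n:ℂ)⁻¹ • (Mᴴ * M)) := by
          rw [smul_smul, mul_inv_cancel₀ hn, one_smul]
      _ = (n : ℂ) • 1 := by rw [h1']
  have hsq : (((Real.sqrt n : ℝ) : ℂ))⁻¹ * (((Real.sqrt n : ℝ) : ℂ))⁻¹ = (n:ℂ)⁻¹ := by
    rw [← mul_inv, ← Complex.ofReal_mul, Real.mul_self_sqrt hnR]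
    simp
  have hortho : ∀ s l s' l', ∑ p : ZMod n × ZMod n, star (ψ s l p) * ψ s' l' p =
      if s = s' ∧ l = l' then 1 else 0 := by
    intro s l s' l'
    rw [hψ, hψ]
    rw [Fintype.sum_prod_type]
    by_cases hs : s = s'
    · subst hs
      have hent := congrFun (congrFun (h2 s) l) l'
      simp only [Matrix.mul_apply, Matrix.conjTranspose_apply, Matrix.of_apply,
        Matrix.smul_apply, Matrix.one_apply, smul_eq_mul] at hent
      have : ∀ j : ZMod n, ∑ k : ZMod n,
          star (if k = j + s then ((Real.sqrt n : ℝ) : ℂ)⁻¹ * Complex.exp (φ s j l * Complex.I) else 0) *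
          (if k = j + s then ((Real.sqrt n : ℝ) : ℂ)⁻¹ * Complex.exp (φ s j l' * Complex.I) else 0) =
          (n:ℂ)⁻¹ * (star (Complex.exp (φ s j l * Complex.I)) * Complex.exp (φ s j l' * Complex.I)) := by
        intro j
        rw [Finset.sum_eq_single (j + s)]
        · simp [star_mul', ← hsq]; ring
        · intro k _ hk; simp [hk]
        · simp
      simp only [this]
      rw [← Finset.mul_sum, hent]
      by_cases hl : l = l' <;> simp [hl, Matrix.one_apply, inv_mul_cancel₀ hn]
    · rw [if_neg (by tauto)]
      apply Finset.sum_eq_zero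
      intro j _
      apply Finset.sum_eq_zero
      intro k _
      by_cases hk : k = j + s
      · have hk' : k ≠ j + s' := by
          rw [hk]; intro h; exact hs (by simpa using h)
        simp only [hk, if_neg hk']
        simp
        exact fun hss => absurd hss hs
      · simp [hk]
  refine ⟨hortho, ?_⟩
  let f : ZMod n × ZMod n → EuclideanSpace ℂ (ZMod n × ZMod n) := fun sl => WithLp.toLp 2 (ψ sl.1 sl.2)
  have horth : Orthonormal ℂ f := by
    rw [orthonormal_iff_ite]
    intro i j
    have h := hortho i.1 i.2 j.1 j.2
    rw [PiLp.inner_apply]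
    simp only [RCLike.inner_apply]
    convert h using 2 with p
    · simp [f, mul_comm]
    exact Prod.ext_iff
  have hcard : Fintype.card (ZMod n × ZMod n) =
      Module.finrank ℂ (EuclideanSpace ℂ (ZMod n × ZMod n)) := by
    simp [finrank_euclideanSpace]
  have key := horth.linearIndependent.span_eq_top_of_card_eq_finrank hcard
  have := congrArg (Submodule.map (WithLp.linearEquiv 2 ℂ (ZMod n × ZMod n → ℂ)).toLinearMap) key
  rw [Submodule.map_span, ← Set.range_comp, Submodule.map_top, LinearEquiv.range] at this
  exact this
end
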